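/- Let α, β, p, q, k > 0 with kp < 1 and kq > 1, and let T_c > 0. If y : [0,∞) → [0,∞) is differentiable and satisfies y'(t) ≤ -(γ(α,β,p,q,k)/T_c)·(α y(t)^p + β y(t)^q)^k at every t with y(t) > 0, then y(t) = 0 for all t ≥ T_c. -/

import Mathlib

/-!
Let `f s = (γ / T_c) (α s ^ p + β s ^ q) ^ k` and `T u = ∫₀ᵘ ds / f s`, the time the flow
`y' = -f y` needs to bring `u` down to `0`. Along an arc where `y > 0` the function
`t ↦ T (y t) + t` is nonincreasing, its derivative being `y' / f y + 1 ≤ 0`. Starting the arc at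
the last zero of `y` before `t` (where `T` vanishes), or at `0` (where `T ≤ T ∞`), shows that
`y t > 0` forces `t < T ∞`. Finally the substitutions `s = c v`, `v = u ^ (1 / (q - p))` and
`u = x / (1 - x)` turn `∫₀^∞ ds / (α s ^ p + β s ^ q) ^ k` into a Beta integral equal to `γ`,
so that `T ∞ = T_c`.
-/

open MeasureTheory Real Set

theorem integral_Ioo_rpow_mul_one_sub_rpow {a b : ℝ} (ha : 0 < a) (hb : 0 < b) :
    ∫ t in Ioo (0 : ℝ) 1, t ^ (a - 1) * (1 - t) ^ (b - 1) = Gamma a * Gamma b / Gamma (a + b) := by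
  have hcomplex : Complex.betaIntegral a b =
      ((∫ t in (0 : ℝ)..1, t ^ (a - 1) * (1 - t) ^ (b - 1) : ℝ) : ℂ) := by
    rw [Complex.betaIntegral, ← intervalIntegral.integral_ofReal]
    refine intervalIntegral.integral_congr fun t ht => ?_
    rw [uIcc_of_le zero_le_one] at ht
    push_cast [Complex.ofReal_cpow ht.1, Complex.ofReal_cpow (sub_nonneg.2 ht.2)]
    rfl
  have h := Complex.Gamma_mul_Gamma_eq_betaIntegral (s := a) (t := b) (by simpa) (by simpa)
  rw [hcomplex, ← Complex.ofReal_add] at h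
  simp only [Complex.Gamma_ofReal] at h
  norm_cast at h
  rw [← integral_Ioc_eq_integral_Ioo, ← intervalIntegral.integral_of_le zero_le_one, h]
  field_simp [(Gamma_pos_of_pos (add_pos ha hb)).ne']

theorem integral_Ioi_rpow_mul_one_add_rpow_eq_integral_Ioo (a b : ℝ) :
    ∫ u in Ioi (0 : ℝ), u ^ (a - 1) * (1 + u) ^ (-(a + b)) =
      ∫ t in Ioo (0 : ℝ) 1, t ^ (a - 1) * (1 - t) ^ (b - 1) := by
  have hderiv : ∀ t ∈ Ioo (0 : ℝ) 1,
      HasDerivWithinAt (fun t => t / (1 - t)) ((1 - t) ^ 2)⁻¹ (Ioo 0 1) t := by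
    intro t ht
    have hs : 1 - t ≠ 0 := (sub_pos.2 ht.2).ne'
    refine (((hasDerivAt_id' t).div ((hasDerivAt_id' t).const_sub 1) hs).congr_deriv
      ?_).hasDerivWithinAt
    field_simp
    ring
  have hinj : InjOn (fun t : ℝ => t / (1 - t)) (Ioo 0 1) := by
    intro t ht t' ht' h
    have := (sub_pos.2 ht.2).ne'
    have := (sub_pos.2 ht'.2).ne'
    field_simp at h
    linarith
  have himage : (fun t : ℝ => t / (1 - t)) '' Ioo 0 1 = Ioi 0 := by
    ext u
    constructor
    · rintro ⟨t, ht, rfl⟩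
      exact div_pos ht.1 (sub_pos.2 ht.2)
    · intro (hu : 0 < u)
      refine ⟨u / (1 + u), ⟨by positivity, (div_lt_one (by positivity)).2 (by linarith)⟩, ?_⟩
      field_simp
      ring
  rw [← himage, integral_image_eq_integral_abs_deriv_smul measurableSet_Ioo hderiv hinj]
  refine setIntegral_congr_fun measurableSet_Ioo fun t ⟨ht, ht1⟩ => ?_
  have hs : 0 < 1 - t := sub_pos.2 ht1
  have h1 : 1 + t / (1 - t) = (1 - t)⁻¹ := by field_simp; ring
  rw [smul_eq_mul, abs_of_pos (by positivity), h1, div_rpow ht.le hs.le, inv_rpow hs.le,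
    rpow_neg hs.le, inv_inv, rpow_add hs, rpow_sub hs, rpow_sub hs, rpow_one]
  field_simp

theorem integral_Ioi_inv_rpow_add_rpow_rpow {p q : ℝ} (hpq : p < q) (k : ℝ) :
    ∫ v in Ioi (0 : ℝ), ((v ^ p + v ^ q) ^ k)⁻¹ =
      (q - p)⁻¹ * ∫ u in Ioi (0 : ℝ), u ^ ((1 - k * p) / (q - p) - 1) * (1 + u) ^ (-k) := by
  have hqp : q - p ≠ 0 := (sub_pos.2 hpq).ne'
  -- `v = u ^ (1 / (q - p))` turns `v ^ p + v ^ q` into `u ^ (p / (q - p)) * (1 + u)`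
  rw [← integral_comp_rpow_Ioi_of_pos (inv_pos.2 (sub_pos.2 hpq)), ← integral_const_mul]
  refine setIntegral_congr_fun measurableSet_Ioi fun u (hu : 0 < u) => ?_
  have hsum : (u ^ (q - p)⁻¹) ^ p + (u ^ (q - p)⁻¹) ^ q = u ^ ((q - p)⁻¹ * p) * (1 + u) := by
    rw [← rpow_mul hu.le, ← rpow_mul hu.le,
      show (q - p)⁻¹ * q = (q - p)⁻¹ * p + 1 by field_simp; ring, rpow_add hu, rpow_one]
    ring
  have hexp : u ^ ((1 - k * p) / (q - p) - 1) =
      u ^ ((q - p)⁻¹ - 1) / u ^ ((q - p)⁻¹ * p * k) := by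
    rw [← rpow_sub hu]
    congr 1
    field_simp
    ring
  rw [smul_eq_mul, hsum, mul_rpow (by positivity) (by positivity), ← rpow_mul hu.le, hexp,
    rpow_neg (by positivity)]
  ring

theorem integral_Ioi_inv_mul_rpow_add_mul_rpow_rpow {α β : ℝ} (hα : 0 < α) (hβ : 0 < β) {p q : ℝ}
    (hpq : p < q) (k : ℝ) :
    ∫ s in Ioi (0 : ℝ), ((α * s ^ p + β * s ^ q) ^ k)⁻¹ =
      (α ^ k)⁻¹ * (α / β) ^ ((1 - k * p) / (q - p)) *
        ∫ v in Ioi (0 : ℝ), ((v ^ p + v ^ q) ^ k)⁻¹ := by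
  have hqp : 0 < q - p := sub_pos.2 hpq
  -- `s = c v` with `c ^ (q - p) = α / β` balances the two terms: `β c ^ q = α c ^ p`
  set c := (α / β) ^ (q - p)⁻¹ with hc_def
  have hc : 0 < c := by positivity
  have hcq : β * c ^ q = α * c ^ p := by
    rw [show q = p + (q - p) by ring, rpow_add hc, rpow_inv_rpow (by positivity) hqp.ne']
    field_simp
  have hconst : (α / β) ^ ((1 - k * p) / (q - p)) = (c ^ (p * k))⁻¹ * c := by
    rw [← rpow_neg hc.le, ← rpow_add_one hc.ne', hc_def, ← rpow_mul (by positivity)]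
    congr 1
    field_simp
    ring
  have hscale := integral_comp_mul_left_Ioi' (fun s => ((α * s ^ p + β * s ^ q) ^ k)⁻¹) 0 hc
  rw [mul_zero] at hscale
  rw [← hscale, smul_eq_mul, ← integral_const_mul, ← integral_const_mul]
  refine setIntegral_congr_fun measurableSet_Ioi fun v (hv : 0 < v) => ?_
  have hsum : α * (c * v) ^ p + β * (c * v) ^ q = α * c ^ p * (v ^ p + v ^ q) := by
    rw [mul_rpow hc.le hv.le, mul_rpow hc.le hv.le, ← mul_assoc β, hcq]
    ring
  rw [hsum, mul_rpow (by positivity) (by positivity), mul_rpow hα.le (by positivity),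
    ← rpow_mul hc.le, hconst]
  ring

noncomputable def predefinedTimeGamma (α β p q k : ℝ) : ℝ :=
  Gamma ((1 - k * p) / (q - p)) * Gamma ((k * q - 1) / (q - p)) / (α ^ k * Gamma k * (q - p)) *
    (α / β) ^ ((1 - k * p) / (q - p))

theorem predefinedTimeGamma_pos {α β p q k : ℝ} (hα : 0 < α) (hβ : 0 < β) (hk : 0 < k)
    (hkp : k * p < 1) (hkq : 1 < k * q) : 0 < predefinedTimeGamma α β p q k := by
  have hqp : 0 < q - p := sub_pos.2 (lt_of_mul_lt_mul_left (hkp.trans hkq) hk.le)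
  have := Gamma_pos_of_pos (div_pos (sub_pos.2 hkp) hqp)
  have := Gamma_pos_of_pos (div_pos (sub_pos.2 hkq) hqp)
  have := Gamma_pos_of_pos hk
  unfold predefinedTimeGamma
  positivity

theorem predefinedTimeGamma_eq_integral {α β p q k : ℝ} (hα : 0 < α) (hβ : 0 < β) (hk : 0 < k)
    (hkp : k * p < 1) (hkq : 1 < k * q) :
    predefinedTimeGamma α β p q k = ∫ s in Ioi (0 : ℝ), ((α * s ^ p + β * s ^ q) ^ k)⁻¹ := by
  have hpq : p < q := lt_of_mul_lt_mul_left (hkp.trans hkq) hk.le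
  have hqp : 0 < q - p := sub_pos.2 hpq
  have hab : (1 - k * p) / (q - p) + (k * q - 1) / (q - p) = k := by field_simp; ring
  rw [predefinedTimeGamma, integral_Ioi_inv_mul_rpow_add_mul_rpow_rpow hα hβ hpq,
    integral_Ioi_inv_rpow_add_rpow_rpow hpq]
  set a := (1 - k * p) / (q - p)
  set b := (k * q - 1) / (q - p)
  have hbeta : ∫ u in Ioi (0 : ℝ), u ^ (a - 1) * (1 + u) ^ (-k) = Gamma a * Gamma b / Gamma k := by
    rw [← hab, integral_Ioi_rpow_mul_one_add_rpow_eq_integral_Ioo,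
      integral_Ioo_rpow_mul_one_sub_rpow (div_pos (sub_pos.2 hkp) hqp)
        (div_pos (sub_pos.2 hkq) hqp)]
  rw [hbeta]
  field_simp

-- The indicator makes the integrand integrable on all of `ℝ`, so `settlingTime f` is continuous.
noncomputable def settlingTime (f : ℝ → ℝ) (u : ℝ) : ℝ :=
  ∫ s in (0 : ℝ)..u, (Ioi 0).indicator (fun s => (f s)⁻¹) s

section settlingTime

variable {f : ℝ → ℝ}

theorem continuous_settlingTime (hf : IntegrableOn (fun u => (f u)⁻¹) (Ioi 0)) :
    Continuous (settlingTime f) :=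
  intervalIntegral.continuous_primitive
    (fun _ _ => ((integrable_indicator_iff measurableSet_Ioi).2 hf).intervalIntegrable) 0

theorem hasDerivAt_settlingTime (hf : ContinuousOn f (Ioi 0))
    (hf_int : IntegrableOn (fun u => (f u)⁻¹) (Ioi 0)) {u : ℝ} (hu : 0 < u) (hfu : f u ≠ 0) :
    HasDerivAt (settlingTime f) (f u)⁻¹ u := by
  have hg := (integrable_indicator_iff measurableSet_Ioi).2 hf_int
  have hcont : ContinuousAt ((Ioi 0).indicator fun u => (f u)⁻¹) u :=
    ((hf u hu).inv₀ hfu |>.continuousAt (Ioi_mem_nhds hu)).congr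
      (Filter.eventuallyEq_of_mem (Ioi_mem_nhds hu) fun v hv => (indicator_of_mem hv _).symm)
  have h := intervalIntegral.integral_hasDerivAt_right (hg.intervalIntegrable (a := 0))
    hg.aestronglyMeasurable.stronglyMeasurableAtFilter hcont
  rwa [indicator_of_mem (show u ∈ Ioi 0 from hu)] at h

theorem settlingTime_pos (hf_pos : ∀ u, 0 < u → 0 < f u)
    (hf_int : IntegrableOn (fun u => (f u)⁻¹) (Ioi 0)) {u : ℝ} (hu : 0 < u) :
    0 < settlingTime f u :=
  intervalIntegral.intervalIntegral_pos_of_pos_on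
    ((integrable_indicator_iff measurableSet_Ioi).2 hf_int).intervalIntegrable
    (fun v hv => by simpa [indicator_of_mem (show v ∈ Ioi 0 from hv.1)] using hf_pos v hv.1) hu

theorem settlingTime_le_integral (hf_pos : ∀ u, 0 < u → 0 < f u)
    (hf_int : IntegrableOn (fun u => (f u)⁻¹) (Ioi 0)) {u : ℝ} (hu : 0 ≤ u) :
    settlingTime f u ≤ ∫ u in Ioi 0, (f u)⁻¹ := by
  rw [← integral_indicator measurableSet_Ioi]
  exact (intervalIntegral.integral_of_le hu).trans_le <|
    setIntegral_le_integral ((integrable_indicator_iff measurableSet_Ioi).2 hf_int)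
      (.of_forall (indicator_nonneg fun v hv => (inv_pos.2 (hf_pos v hv)).le))

end settlingTime

theorem exists_mem_Icc_forall_Ioc_ne_zero {y : ℝ → ℝ} {a b : ℝ} (hab : a ≤ b)
    (hy : ContinuousOn y (Icc a b)) :
    ∃ s ∈ Icc a b, (s = a ∨ y s = 0) ∧ ∀ t ∈ Ioc s b, y t ≠ 0 := by
  set S := insert a (Icc a b ∩ y ⁻¹' {0})
  have hS : IsCompact S := (isCompact_Icc.of_isClosed_subset
    (hy.preimage_isClosed_of_isClosed isClosed_Icc isClosed_singleton) inter_subset_left).insert a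
  have hSab : S ⊆ Icc a b := insert_subset (left_mem_Icc.2 hab) inter_subset_left
  have hsS : sSup S ∈ S := hS.sSup_mem (insert_nonempty _ _)
  refine ⟨sSup S, hSab hsS, hsS.imp_right fun h => h.2, fun t ht hyt => ?_⟩
  have htS : t ∈ S := .inr ⟨⟨(hSab hsS).1.trans ht.1.le, ht.2⟩, hyt⟩
  exact (le_csSup hS.bddAbove htS).not_gt ht.1

theorem antitoneOn_comp_add_of_deriv_le_neg {f H y y' : ℝ → ℝ} {a b : ℝ}
    (hf : ∀ u, 0 < u → 0 < f u) (hH : Continuous H) (hH' : ∀ u, 0 < u → HasDerivAt H (f u)⁻¹ u)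
    (hy : ContinuousOn y (Icc a b)) (hy' : ∀ t ∈ Ioo a b, HasDerivAt y (y' t) t)
    (hpos : ∀ t ∈ Ioo a b, 0 < y t) (hineq : ∀ t ∈ Ioo a b, y' t ≤ -f (y t)) :
    AntitoneOn (fun t => H (y t) + t) (Icc a b) := by
  refine antitoneOn_of_hasDerivWithinAt_nonpos (convex_Icc a b)
    ((hH.comp_continuousOn hy).add continuousOn_id) (f' := fun t => (f (y t))⁻¹ * y' t + 1)
    (fun t ht => ?_) (fun t ht => ?_) <;> rw [interior_Icc] at ht
  · exact (((hH' _ (hpos t ht)).comp t (hy' t ht)).add (hasDerivAt_id t)).hasDerivWithinAt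
  · have hfy := hf _ (hpos t ht)
    calc (f (y t))⁻¹ * y' t + 1 ≤ (f (y t))⁻¹ * -f (y t) + 1 := by gcongr; exact hineq t ht
      _ = 0 := by field_simp; ring

theorem eq_zero_of_deriv_le_neg {f : ℝ → ℝ} (hf : ContinuousOn f (Ioi 0))
    (hf_pos : ∀ u, 0 < u → 0 < f u) (hf_int : IntegrableOn (fun u => (f u)⁻¹) (Ioi 0))
    {y y' : ℝ → ℝ} (hnonneg : ∀ t, 0 ≤ t → 0 ≤ y t) (hderiv : ∀ t, 0 ≤ t → HasDerivAt y (y' t) t)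
    (hineq : ∀ t, 0 ≤ t → 0 < y t → y' t ≤ -f (y t)) {t : ℝ}
    (ht : ∫ u in Ioi 0, (f u)⁻¹ ≤ t) : y t = 0 := by
  have ht0 : 0 ≤ t := by
    simpa [settlingTime] using (settlingTime_le_integral hf_pos hf_int le_rfl).trans ht
  by_contra hyt
  have hy : ContinuousOn y (Icc 0 t) := fun r hr => (hderiv r hr.1).continuousAt.continuousWithinAt
  obtain ⟨s, hs, hs_zero, hs_ne⟩ := exists_mem_Icc_forall_Ioc_ne_zero ht0 hy
  have hpos : ∀ r ∈ Ioo s t, 0 < y r := fun r hr =>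
    (hnonneg r (hs.1.trans hr.1.le)).lt_of_ne' (hs_ne r (Ioo_subset_Ioc_self hr))
  have hanti := antitoneOn_comp_add_of_deriv_le_neg hf_pos (continuous_settlingTime hf_int)
    (fun u hu => hasDerivAt_settlingTime hf hf_int hu (hf_pos u hu).ne')
    (hy.mono (Icc_subset_Icc_left hs.1)) (fun r hr => hderiv r (hs.1.trans hr.1.le)) hpos
    (fun r hr => hineq r (hs.1.trans hr.1.le) (hpos r hr))
  have hdecay : settlingTime f (y t) + t ≤ settlingTime f (y s) + s :=
    hanti (left_mem_Icc.2 hs.2) (right_mem_Icc.2 hs.2) hs.2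
  have hstart : settlingTime f (y s) + s ≤ t := by
    rcases hs_zero with rfl | hys
    · linarith [settlingTime_le_integral hf_pos hf_int (hnonneg 0 le_rfl)]
    · simp only [hys, settlingTime, intervalIntegral.integral_same]
      linarith [hs.2]
  linarith [settlingTime_pos hf_pos hf_int ((hnonneg t ht0).lt_of_ne' hyt)]

theorem scalar_comparison_predefined_time_general
    (α β p q k : ℝ) (hα : 0 < α) (hβ : 0 < β) (hk : 0 < k)
    (hkp : k * p < 1) (hkq : 1 < k * q)
    (Tc : ℝ) (hTc : 0 < Tc)
    (y y' : ℝ → ℝ)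
    (hnonneg : ∀ t, 0 ≤ t → 0 ≤ y t)
    (hderiv : ∀ t, 0 ≤ t → HasDerivAt y (y' t) t)
    (hineq : ∀ t, 0 ≤ t → 0 < y t →
      y' t ≤
        -(Real.Gamma ((1 - k * p) / (q - p)) * Real.Gamma ((k * q - 1) / (q - p)) /
            (α ^ k * Real.Gamma k * (q - p)) * (α / β) ^ ((1 - k * p) / (q - p)) / Tc) *
          (α * y t ^ p + β * y t ^ q) ^ k) :
    ∀ t, Tc ≤ t → y t = 0 := by
  have hγ := predefinedTimeGamma_pos hα hβ hk hkp hkq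
  set f : ℝ → ℝ := fun s => predefinedTimeGamma α β p q k / Tc * (α * s ^ p + β * s ^ q) ^ k
  have hf_integral : ∫ s in Ioi 0, (f s)⁻¹ = Tc := by
    simp only [f, mul_inv, inv_div]
    rw [integral_const_mul, ← predefinedTimeGamma_eq_integral hα hβ hk hkp hkq]
    field_simp
  have hf : ContinuousOn f (Ioi 0) := by
    refine continuousOn_const.mul (ContinuousOn.rpow_const ?_ fun _ _ => .inr hk.le)
    exact (continuousOn_const.mul (continuousOn_id.rpow_const fun s hs => .inl (ne_of_gt hs))).add
      (continuousOn_const.mul (continuousOn_id.rpow_const fun s hs => .inl (ne_of_gt hs)))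
  intro t ht
  -- a non-integrable function has Bochner integral `0`, so integrability comes for free
  refine eq_zero_of_deriv_le_neg hf (fun u hu => by positivity)
    (.of_integral_ne_zero (hf_integral ▸ hTc.ne')) hnonneg hderiv
    (fun t ht hyt => (hineq t ht hyt).trans_eq (neg_mul _ _)) (hf_integral.trans_le ht)

/-- Comparison lemma: a differentiable nonnegative scalar function `y` on
`[0,∞)` whose derivative satisfies `y' ≤ -(γ/T_c)(α y^p + β y^q)^k` whenever `y > 0`
vanishes for all `t ≥ T_c`. -/
theorem scalar_comparison_predefined_time
    (α β p q k : ℝ) (hα : 0 < α) (hβ : 0 < β) (hp : 0 < p) (hq : 0 < q) (hk : 0 < k)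
    (hkp : k * p < 1) (hkq : 1 < k * q)
    (Tc : ℝ) (hTc : 0 < Tc)
    (y y' : ℝ → ℝ)
    (hnonneg : ∀ t, 0 ≤ t → 0 ≤ y t)
    (hderiv : ∀ t, 0 ≤ t → HasDerivAt y (y' t) t)
    (hineq : ∀ t, 0 ≤ t → 0 < y t →
      y' t ≤
        -(Real.Gamma ((1 - k * p) / (q - p)) * Real.Gamma ((k * q - 1) / (q - p)) /
            (α ^ k * Real.Gamma k * (q - p)) * (α / β) ^ ((1 - k * p) / (q - p)) / Tc) *
          (α * y t ^ p + β * y t ^ q) ^ k) :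
    ∀ t, Tc ≤ t → y t = 0 :=
  scalar_comparison_predefined_time_general α β p q k hα hβ hk hkp hkq Tc hTc y y' hnonneg hderiv
    hineq
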